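/- arXiv:2309.03206 — 4 statements merged into one kernel-verified Lean document; each statement's English description precedes it below -/
import Mathlib

section
/- Let C be an isodual binary linear code of length n, let σ ∈ S_n be such that C^⊥ = C^σ, let X = {1,…,n}, and let G = Aut(C). Suppose that the action of G on the set of t-element subsets of X has exactly two orbits, GT_1 and GT_2, and that (GT_1)^σ = GT_2. Then the polynomial J_{C,T} + J_{C^⊥,T} is the same for every t-element subset T of X; in fact, for every t-element subset T, J_{C,T} + J_{C^⊥,T} = J_{C,T_1} + J_{C,T_2}. -/
/-- Hamming weight of a binary vector. -/
def wt {n : ℕ} (c : Fin n → ZMod 2) : ℕ :=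
  (Finset.univ.filter fun i => c i ≠ 0).card

/-- Support of a binary vector, as a finset of coordinates. -/
def suppF {n : ℕ} (c : Fin n → ZMod 2) : Finset (Fin n) :=
  Finset.univ.filter fun i => c i ≠ 0

/-- Dual code w.r.t. the standard inner product on `F₂ⁿ`. -/
def dualCode {n : ℕ} (C : Set (Fin n → ZMod 2)) : Set (Fin n → ZMod 2) :=
  {y | ∀ x ∈ C, ∑ i, x i * y i = 0}

/-- The code `C^σ = {(c_{σ(1)},…,c_{σ(n)}) : c ∈ C}`. -/
def permCode {n : ℕ} (σ : Equiv.Perm (Fin n)) (C : Set (Fin n → ZMod 2)) :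
    Set (Fin n → ZMod 2) :=
  (fun c => c ∘ σ) '' C

/-- Automorphism group (as a set of permutations) of a code: `Aut(C) = {σ : C^σ = C}`. -/
def autCode {n : ℕ} (C : Set (Fin n → ZMod 2)) : Set (Equiv.Perm (Fin n)) :=
  {σ | permCode σ C = C}

/-- Jacobi polynomial `J_{C,T}` in the variables `w = X 0`, `z = X 1`, `x = X 2`, `y = X 3`:
`J_{C,T} = ∑_{c ∈ C} w^{m₀(c)} z^{m₁(c)} x^{n₀(c)} y^{n₁(c)}`. -/
noncomputable def jacobiPoly {n : ℕ} (C : Set (Fin n → ZMod 2)) (T : Finset (Fin n)) :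
    MvPolynomial (Fin 4) ℤ :=
  ∑ c ∈ C.toFinite.toFinset,
    MvPolynomial.X 0 ^ (T.filter fun j => c j = 0).card *
      MvPolynomial.X 1 ^ (T.filter fun j => c j = 1).card *
      MvPolynomial.X 2 ^ (Tᶜ.filter fun j => c j = 0).card *
      MvPolynomial.X 3 ^ (Tᶜ.filter fun j => c j = 1).card

/-- The orbit `GT = {T^σ : σ ∈ G}` of a finset `T` under a set `G` of permutations. -/
def orbitT {n : ℕ} (G : Set (Equiv.Perm (Fin n))) (T : Finset (Fin n)) :
    Set (Finset (Fin n)) :=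
  {S | ∃ σ ∈ G, T.image σ = S}

/-! Dualising amounts to permuting: `J_{C^⊥,T} = J_{C^σ,T} = J_{C,T^σ}`, and `J_{C,·}` is constant
on `Aut(C)`-orbits. Since `σ` maps the orbit of `T₁` onto that of `T₂` and is injective on subsets,
`T` and `T^σ` always lie in different orbits, one in each. -/

lemma Finset.image_compl_equiv {α β : Type*} [Fintype α] [Fintype β] [DecidableEq α]
    [DecidableEq β] (e : α ≃ β) (s : Finset α) : sᶜ.image e = (s.image e)ᶜ := by
  simp only [Finset.compl_eq_univ_sdiff]
  rw [Finset.image_sdiff_of_injOn e.injective.injOn s.subset_univ, Finset.image_univ_equiv]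

lemma Finset.card_filter_comp_of_injective {α β : Type*} [DecidableEq β] {f : α → β}
    (hf : Function.Injective f) (s : Finset α) (p : β → Prop) [DecidablePred p] :
    (s.filter fun a => p (f a)).card = ((s.image f).filter p).card := by
  rw [Finset.filter_image, Finset.card_image_of_injective _ hf]

lemma permCode_eq_image_toFinset {n : ℕ} (σ : Equiv.Perm (Fin n)) (C : Set (Fin n → ZMod 2)) :
    (permCode σ C).toFinite.toFinset = C.toFinite.toFinset.image (· ∘ σ) := by
  ext c
  simp [permCode]

lemma jacobiPoly_permCode {n : ℕ} (σ : Equiv.Perm (Fin n)) (C : Set (Fin n → ZMod 2))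
    (T : Finset (Fin n)) :
    jacobiPoly (permCode σ C) T = jacobiPoly C (T.image σ) := by
  have hinj : Function.Injective fun c : Fin n → ZMod 2 => c ∘ σ :=
    σ.surjective.injective_comp_right
  unfold jacobiPoly
  rw [permCode_eq_image_toFinset, Finset.sum_image hinj.injOn, ← Finset.image_compl_equiv]
  refine Finset.sum_congr rfl fun c _ => ?_
  simp only [Function.comp_apply, ← Finset.card_filter_comp_of_injective σ.injective]

lemma jacobiPoly_eq_of_mem_orbitT {n : ℕ} {C : Set (Fin n → ZMod 2)} {T S : Finset (Fin n)}
    (h : S ∈ orbitT (autCode C) T) : jacobiPoly C S = jacobiPoly C T := by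
  obtain ⟨τ, hτ, rfl⟩ := h
  rw [← jacobiPoly_permCode τ C T, hτ]

lemma Set.mem_of_image_mem_union_of_disjoint {α : Type*} {f : α → α} {A B : Set α} {x : α}
    (hf : Function.Injective f) (hAB : f '' A = B) (hdisj : Disjoint A B) (hx : x ∈ B)
    (hfx : f x ∈ A ∪ B) : f x ∈ A := by
  refine hfx.resolve_right fun hfxB => ?_
  rw [← hAB, hf.mem_set_image] at hfxB
  exact Set.disjoint_left.mp hdisj hfxB hx

theorem jacobi_sum_independent_general {n t : ℕ} (C : Submodule (ZMod 2) (Fin n → ZMod 2))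
    (σ : Equiv.Perm (Fin n)) (hσ : dualCode ↑C = permCode σ ↑C)
    (T₁ T₂ : Finset (Fin n))
    (hcover : ∀ T : Finset (Fin n), T.card = t →
      T ∈ orbitT (autCode ↑C) T₁ ∨ T ∈ orbitT (autCode ↑C) T₂)
    (hdisj : Disjoint (orbitT (autCode ↑C) T₁) (orbitT (autCode ↑C) T₂))
    (horb : (fun S : Finset (Fin n) => S.image σ) '' orbitT (autCode ↑C) T₁
      = orbitT (autCode ↑C) T₂) :
    ∀ T : Finset (Fin n), T.card = t →
      jacobiPoly ↑C T + jacobiPoly (dualCode ↑C) T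
        = jacobiPoly ↑C T₁ + jacobiPoly ↑C T₂ := by
  intro T hT
  rw [hσ, jacobiPoly_permCode]
  rcases hcover T hT with hT₁ | hT₂
  · have hσT : T.image σ ∈ orbitT (autCode ↑C) T₂ := horb ▸ Set.mem_image_of_mem _ hT₁
    rw [jacobiPoly_eq_of_mem_orbitT hT₁, jacobiPoly_eq_of_mem_orbitT hσT]
  · have hσT : T.image σ ∈ orbitT (autCode ↑C) T₁ :=
      Set.mem_of_image_mem_union_of_disjoint (Finset.image_injective σ.injective) horb hdisj hT₂
        (hcover _ ((Finset.card_image_of_injective _ σ.injective).trans hT))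
    rw [jacobiPoly_eq_of_mem_orbitT hT₂, jacobiPoly_eq_of_mem_orbitT hσT, add_comm]

/-- For an isodual binary linear code `C` with `C^⊥ = C^σ`, if `Aut(C)` has
exactly two orbits `GT₁ ⊔ GT₂` on `t`-element subsets and `(GT₁)^σ = GT₂`, then
`J_{C,T} + J_{C^⊥,T}` is independent of the `t`-subset `T`; indeed it always equals
`J_{C,T₁} + J_{C,T₂}`. -/
theorem jacobi_sum_independent {n t : ℕ} (C : Submodule (ZMod 2) (Fin n → ZMod 2))
    (σ : Equiv.Perm (Fin n)) (hσ : dualCode ↑C = permCode σ ↑C)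
    (T₁ T₂ : Finset (Fin n)) (hT₁ : T₁.card = t) (hT₂ : T₂.card = t)
    (hcover : ∀ T : Finset (Fin n), T.card = t →
      T ∈ orbitT (autCode ↑C) T₁ ∨ T ∈ orbitT (autCode ↑C) T₂)
    (hdisj : Disjoint (orbitT (autCode ↑C) T₁) (orbitT (autCode ↑C) T₂))
    (horb : (fun S : Finset (Fin n) => S.image σ) '' orbitT (autCode ↑C) T₁
      = orbitT (autCode ↑C) T₂) :
    ∀ T : Finset (Fin n), T.card = t →
      jacobiPoly ↑C T + jacobiPoly (dualCode ↑C) T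
        = jacobiPoly ↑C T₁ + jacobiPoly ↑C T₂ :=
  jacobi_sum_independent_general C σ hσ T₁ T₂ hcover hdisj horb
end

section
/- Let C be a binary linear code of length n and let ℓ, t ∈ ℕ with t ≤ ℓ. Then the shell C_ℓ is a combinatorial t-design if and only if the coefficient of the monomial w^0 z^t x^{n−ℓ} y^{ℓ−t} in the Jacobi polynomial J_{C,T}(w,z,x,y) is independent of the choice of the subset T ⊆ {1,…,n} with |T| = t. -/
/-- The shell `C_ℓ` of weight-`ℓ` elements of a code `C`. -/
def shell {n : ℕ} (C : Set (Fin n → ZMod 2)) (ℓ : ℕ) : Set (Fin n → ZMod 2) :=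
  {c | c ∈ C ∧ wt c = ℓ}

/-- A combinatorial `t`-`(n, ℓ, lam)` design with point set `Fin n` and block collection `B`:
all blocks have `ℓ` elements, and every `t`-element subset of the point set is contained in
exactly `lam` blocks. -/
def IsDesign (n t ℓ lam : ℕ) (B : Finset (Finset (Fin n))) : Prop :=
  (∀ b ∈ B, b.card = ℓ) ∧
    ∀ S : Finset (Fin n), S.card = t → (B.filter fun b => S ⊆ b).card = lam

/-- The block collection `B(C_ℓ) = {supp(x) : x ∈ C_ℓ}` of a shell. -/
noncomputable def shellBlocks {n : ℕ} (C : Set (Fin n → ZMod 2)) (ℓ : ℕ) :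
    Finset (Finset (Fin n)) :=
  (shell C ℓ).toFinite.toFinset.image suppF

/-! A codeword `c` contributes to the coefficient of `w^0 z^t x^{n-ℓ} y^{ℓ-t}` in `J_{C,T}`
exactly when `c` has no zero on `T` and weight `ℓ`, i.e. when `supp c` is a block of `C_ℓ`
containing `T`. Since a binary vector is determined by its support, that coefficient is the
number of blocks through `T`, and `C_ℓ` is a `t`-design iff this number does not depend on `T`. -/

open Finset MvPolynomial

lemma ZMod.two_ne_zero_iff_eq_one (a : ZMod 2) : a ≠ 0 ↔ a = 1 := by
  revert a; decide

section BinaryVector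

variable {n : ℕ}

@[simp]
lemma mem_suppF {c : Fin n → ZMod 2} {i : Fin n} : i ∈ suppF c ↔ c i ≠ 0 := by
  simp [suppF]

lemma suppF_injective : Function.Injective (suppF (n := n)) := by
  intro c d h
  funext i
  have hi : c i ≠ 0 ↔ d i ≠ 0 := by simpa using Finset.ext_iff.mp h i
  revert hi
  generalize c i = a
  generalize d i = b
  revert a b
  decide

lemma wt_le (c : Fin n → ZMod 2) : wt c ≤ n :=
  (card_filter_le _ _).trans (card_univ.trans (Fintype.card_fin n)).le

lemma filter_ne_zero_eq_filter_eq_one (s : Finset (Fin n)) (c : Fin n → ZMod 2) :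
    {j ∈ s | c j ≠ 0} = {j ∈ s | c j = 1} :=
  filter_congr fun j _ => ZMod.two_ne_zero_iff_eq_one (c j)

lemma card_filter_eq_zero_add_card_filter_eq_one (s : Finset (Fin n)) (c : Fin n → ZMod 2) :
    #{j ∈ s | c j = 0} + #{j ∈ s | c j = 1} = #s := by
  rw [← filter_ne_zero_eq_filter_eq_one, card_filter_add_card_filter_not]

lemma wt_eq_card_filter_add_card_filter_compl (T : Finset (Fin n)) (c : Fin n → ZMod 2) :
    wt c = #{j ∈ T | c j = 1} + #{j ∈ Tᶜ | c j = 1} := by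
  rw [wt, filter_ne_zero_eq_filter_eq_one, ← card_union_of_disjoint
    (disjoint_filter_filter disjoint_compl_right), ← filter_union, union_compl]

lemma subset_suppF_iff (T : Finset (Fin n)) (c : Fin n → ZMod 2) :
    T ⊆ suppF c ↔ #{j ∈ T | c j = 0} = 0 := by
  simp [subset_iff, filter_eq_empty_iff]

lemma jacobi_exponents_eq_iff {ℓ t : ℕ} {T : Finset (Fin n)} (hT : #T = t)
    (c : Fin n → ZMod 2) :
    (#{j ∈ T | c j = 0} = 0 ∧ #{j ∈ T | c j = 1} = t ∧
        #{j ∈ Tᶜ | c j = 0} = n - ℓ ∧ #{j ∈ Tᶜ | c j = 1} = ℓ - t) ↔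
      wt c = ℓ ∧ T ⊆ suppF c := by
  have hT' := card_filter_eq_zero_add_card_filter_eq_one T c
  have hTc := card_filter_eq_zero_add_card_filter_eq_one Tᶜ c
  have hwt := wt_eq_card_filter_add_card_filter_compl T c
  rw [card_compl, Fintype.card_fin] at hTc
  have hwt_le := wt_le c
  have hT_le : #T ≤ n := T.card_le_univ.trans_eq (Fintype.card_fin n)
  rw [subset_suppF_iff]
  -- for `ℓ < t` the truncated `ℓ - t = 0` makes the left side force `n - ℓ = n - t`, impossible
  -- as `t ≤ n`, while the right side fails because `T ⊆ supp c` gives `t ≤ wt c`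
  omega

end BinaryVector

lemma X_pow_mul_X_pow_mul_X_pow_mul_X_pow {σ R : Type*} [CommSemiring R] (i j k l : σ)
    (a b c d : ℕ) :
    (X i ^ a * X j ^ b * X k ^ c * X l ^ d : MvPolynomial σ R) =
      monomial (Finsupp.single i a + Finsupp.single j b + Finsupp.single k c +
        Finsupp.single l d) 1 := by
  simp [X_pow_eq_monomial, monomial_mul]

lemma fin_four_single_add_eq_iff {a b c d a' b' c' d' : ℕ} :
    Finsupp.single (0 : Fin 4) a + Finsupp.single 1 b + Finsupp.single 2 c +
        Finsupp.single 3 d =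
      Finsupp.single 0 a' + Finsupp.single 1 b' + Finsupp.single 2 c' + Finsupp.single 3 d' ↔
    a = a' ∧ b = b' ∧ c = c' ∧ d = d' := by
  simp [Finsupp.ext_iff, Fin.forall_fin_succ, Finsupp.single_apply]

section Code

variable {n : ℕ} (C : Set (Fin n → ZMod 2))

lemma coeff_jacobiPoly (T : Finset (Fin n)) (a b c d : ℕ) :
    coeff (Finsupp.single 0 a + Finsupp.single 1 b + Finsupp.single 2 c + Finsupp.single 3 d)
        (jacobiPoly C T) =
      #{x ∈ C.toFinite.toFinset | #{j ∈ T | x j = 0} = a ∧ #{j ∈ T | x j = 1} = b ∧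
        #{j ∈ Tᶜ | x j = 0} = c ∧ #{j ∈ Tᶜ | x j = 1} = d} := by
  simp only [jacobiPoly, coeff_sum, X_pow_mul_X_pow_mul_X_pow_mul_X_pow, coeff_monomial,
    fin_four_single_add_eq_iff, card_filter, Nat.cast_sum, Nat.cast_ite, Nat.cast_one,
    Nat.cast_zero]

lemma coeff_jacobiPoly_eq_card_covering {ℓ t : ℕ} {T : Finset (Fin n)} (hT : #T = t) :
    coeff (Finsupp.single 1 t + Finsupp.single 2 (n - ℓ) + Finsupp.single 3 (ℓ - t))
        (jacobiPoly C T) =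
      #{c ∈ C.toFinite.toFinset | wt c = ℓ ∧ T ⊆ suppF c} := by
  rw [← zero_add (Finsupp.single 1 t), ← Finsupp.single_zero (0 : Fin 4),
    coeff_jacobiPoly]
  simp only [jacobi_exponents_eq_iff hT]

lemma card_of_mem_shellBlocks {ℓ : ℕ} {b : Finset (Fin n)} (hb : b ∈ shellBlocks C ℓ) :
    #b = ℓ := by
  obtain ⟨c, hc, rfl⟩ := mem_image.mp hb
  exact ((shell C ℓ).toFinite.mem_toFinset.mp hc).2

lemma card_filter_shellBlocks_superset (ℓ : ℕ) (S : Finset (Fin n)) :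
    #{b ∈ shellBlocks C ℓ | S ⊆ b} =
      #{c ∈ C.toFinite.toFinset | wt c = ℓ ∧ S ⊆ suppF c} := by
  rw [shellBlocks, filter_image, card_image_of_injective _ suppF_injective]
  congr 1
  ext c
  simp [shell, and_assoc]

end Code

lemma exists_isDesign_iff {n t ℓ : ℕ} {B : Finset (Finset (Fin n))}
    (hB : ∀ b ∈ B, #b = ℓ) :
    (∃ lam, IsDesign n t ℓ lam B) ↔
      ∀ S S' : Finset (Fin n), #S = t → #S' = t →
        #{b ∈ B | S ⊆ b} = #{b ∈ B | S' ⊆ b} := by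
  constructor
  · rintro ⟨lam, -, hlam⟩ S S' hS hS'
    rw [hlam S hS, hlam S' hS']
  · intro h
    by_cases ht : ∃ S₀ : Finset (Fin n), #S₀ = t
    · obtain ⟨S₀, hS₀⟩ := ht
      exact ⟨#{b ∈ B | S₀ ⊆ b}, hB, fun S hS => h S S₀ hS hS₀⟩
    · exact ⟨0, hB, fun S hS => absurd ⟨S, hS⟩ ht⟩

theorem shell_design_iff_jacobi_coeff_general {n ℓ t : ℕ}
    (C : Submodule (ZMod 2) (Fin n → ZMod 2)) :
    (∃ lam : ℕ, IsDesign n t ℓ lam (shellBlocks ↑C ℓ)) ↔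
      ∀ T T' : Finset (Fin n), T.card = t → T'.card = t →
        MvPolynomial.coeff
          (Finsupp.single 1 t + Finsupp.single 2 (n - ℓ) + Finsupp.single 3 (ℓ - t))
          (jacobiPoly ↑C T)
        = MvPolynomial.coeff
          (Finsupp.single 1 t + Finsupp.single 2 (n - ℓ) + Finsupp.single 3 (ℓ - t))
          (jacobiPoly ↑C T') := by
  rw [exists_isDesign_iff fun b => card_of_mem_shellBlocks (C : Set (Fin n → ZMod 2))]
  refine forall₄_congr fun T T' hT hT' => ?_
  rw [coeff_jacobiPoly_eq_card_covering _ hT, coeff_jacobiPoly_eq_card_covering _ hT',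
    card_filter_shellBlocks_superset, card_filter_shellBlocks_superset, Nat.cast_inj]

/-- For a binary linear code `C` of length `n` and `t ≤ ℓ`, the shell `C_ℓ`
is a combinatorial `t`-design iff the coefficient of `w^0 z^t x^{n-ℓ} y^{ℓ-t}` in `J_{C,T}`
is independent of the choice of the `t`-subset `T`. -/
theorem shell_design_iff_jacobi_coeff {n ℓ t : ℕ}
    (C : Submodule (ZMod 2) (Fin n → ZMod 2)) (htℓ : t ≤ ℓ) :
    (∃ lam : ℕ, IsDesign n t ℓ lam (shellBlocks ↑C ℓ)) ↔
      ∀ T T' : Finset (Fin n), T.card = t → T'.card = t →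
        MvPolynomial.coeff
          (Finsupp.single 1 t + Finsupp.single 2 (n - ℓ) + Finsupp.single 3 (ℓ - t))
          (jacobiPoly ↑C T)
        = MvPolynomial.coeff
          (Finsupp.single 1 t + Finsupp.single 2 (n - ℓ) + Finsupp.single 3 (ℓ - t))
          (jacobiPoly ↑C T') :=
  shell_design_iff_jacobi_coeff_general C
end

section
/- Let p be a prime with p ≡ 1 (mod 8) and let Q̃_{p+1} be the extended binary quadratic residue code of length p+1. Then Q̃_{p+1} ∩ Q̃_{p+1}^⊥ = {0, 1}, where 0 is the zero vector and 1 is the all-ones vector of length p+1. -/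
/-- The binary quadratic residue code of length `p`: the codewords are the coefficient vectors
of the polynomials of degree `< p` over `F₂` that vanish at `α^ℓ` for every nonzero quadratic
residue `ℓ` mod `p`, where `α` is a fixed primitive `p`-th root of unity in an extension field
`K` of `F₂`; equivalently (for prime `p ≡ ±1 mod 8`), the cyclic code of length `p` with
generator polynomial `∏_{ℓ ∈ (F_p^*)²} (x - α^ℓ)`. -/
def QRCode (p : ℕ) (K : Type*) [Field K] [CharP K 2] (α : K) : Set (Fin p → ZMod 2) :=
  {c | ∀ ℓ : ZMod p, (∃ m : ZMod p, m ≠ 0 ∧ m ^ 2 = ℓ) →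
    ∑ i : Fin p, (ZMod.castHom (dvd_refl 2) K (c i)) * α ^ ((i : ℕ) * ℓ.val) = 0}

/-- The extended binary quadratic residue code of length `p + 1`, obtained from `Q_p` by
appending an overall parity-check coordinate. -/
def extQRCode (p : ℕ) (K : Type*) [Field K] [CharP K 2] (α : K) :
    Set (Fin (p + 1) → ZMod 2) :=
  {c | (fun i : Fin p => c i.castSucc) ∈ QRCode p K α ∧ ∑ i, c i = 0}

/-! Let `ψ` be the additive character `k ↦ α ^ k` of `ZMod p` and `χ` the quadratic character.
For `c` in `Q̃ ∩ Q̃^⊥` put `d_i = c_i + c_∞`; it suffices that the discrete Fourier transform `d̂`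
vanishes. It does at `0` by the parity check and at the residues because `c` restricts to a word
of `Q_p`. Since `2` is a residue, Frobenius shows that the Gauss periods `η_± = ∑_{χ ℓ = ±1} ψ ℓ`
are idempotent, and `η_+ + η_- = 1`; so for the right sign `ε` the indicator `E` of `{χ = ε}`
has `Ê` equal to `0` at the residues and `1` at the non-residues. The translates of `E` are then
words of `Q_p`, their parity extensions lie in `Q̃`, and orthogonality of `c` to them says that
the correlation of `d` with `E` vanishes. Its transform is `d̂(m) Ê(-m)`, and `Ê(-m) = 1` at a
non-residue `m` because `-1` is a residue. -/

open Finset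

section Fourier

variable {n : ℕ} [NeZero n] {K : Type*} [Field K] {ψ : AddChar (ZMod n) K}

variable (ψ) in
def zmodFourier (f : ZMod n → K) (m : ZMod n) : K := ∑ k, f k * ψ (k * m)

theorem zmodFourier_const (hψ : ψ.IsPrimitive) (a : K) {m : ZMod n} (hm : m ≠ 0) :
    zmodFourier ψ (fun _ => a) m = 0 := by
  rw [zmodFourier, ← mul_sum, AddChar.sum_mulShift m hψ, if_neg hm, Nat.cast_zero, mul_zero]

variable (ψ) in
theorem zmodFourier_add (f g : ZMod n → K) (m : ZMod n) :
    zmodFourier ψ (f + g) m = zmodFourier ψ f m + zmodFourier ψ g m := by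
  simp only [zmodFourier, Pi.add_apply, add_mul, sum_add_distrib]

variable (ψ) in
theorem zmodFourier_comp_sub (f : ZMod n → K) (j m : ZMod n) :
    zmodFourier ψ (fun k => f (k - j)) m = ψ (j * m) * zmodFourier ψ f m := by
  rw [zmodFourier, zmodFourier, mul_sum, ← Equiv.sum_comp (Equiv.addRight j)]
  refine sum_congr rfl fun k _ => ?_
  rw [Equiv.coe_addRight, add_sub_cancel_right, add_mul, AddChar.map_add_eq_mul]
  ring

variable (ψ) in
theorem zmodFourier_correlation (f g : ZMod n → K) (m : ZMod n) :
    zmodFourier ψ (fun j => ∑ k, g (k - j) * f k) m = zmodFourier ψ f m * zmodFourier ψ g (-m) := by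
  simp only [zmodFourier, sum_mul]
  rw [sum_comm]
  refine sum_congr rfl fun k _ => ?_
  rw [mul_sum]
  refine Fintype.sum_equiv (Equiv.subLeft k) _ _ fun j => ?_
  have hjk : j * m = k * m + (k - j) * -m := by ring
  rw [Equiv.subLeft_apply, hjk, AddChar.map_add_eq_mul]
  ring

theorem sum_zmodFourier_mul (hψ : ψ.IsPrimitive) (f : ZMod n → K) (t : ZMod n) :
    ∑ m, zmodFourier ψ f m * ψ (m * -t) = n * f t := by
  have hinner (k : ZMod n) : ∑ m, f k * ψ (k * m) * ψ (m * -t) = if k = t then n * f t else 0 := by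
    have (m : ZMod n) : k * m + m * -t = m * (k - t) := by ring
    simp_rw [mul_assoc, ← AddChar.map_add_eq_mul, this, ← mul_sum, AddChar.sum_mulShift _ hψ,
      sub_eq_zero, ZMod.card]
    split_ifs with h <;> simp [h, mul_comm]
  simp_rw [zmodFourier, sum_mul]
  rw [sum_comm, sum_congr rfl fun k _ => hinner k, sum_ite_eq']
  simp

theorem eq_zero_of_zmodFourier_eq_zero (hψ : ψ.IsPrimitive) (hn : (n : K) ≠ 0)
    {f : ZMod n → K} (hf : ∀ m, zmodFourier ψ f m = 0) : f = 0 := by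
  funext t
  have := sum_zmodFourier_mul hψ f t
  simp only [hf, zero_mul, sum_const_zero] at this
  exact (mul_eq_zero.mp this.symm).resolve_left hn

end Fourier

section GaussPeriod

variable {p : ℕ} [Fact p.Prime] {K : Type*} [Field K] {ψ : AddChar (ZMod p) K}

local notation "χ" => quadraticChar (ZMod p)

variable (ψ) in
def gaussPeriod (ε : ℤ) : K := ∑ ℓ with χ ℓ = ε, ψ ℓ

theorem sum_filter_quadraticChar_mul {t : ZMod p} (ht : t ≠ 0) (ε : ℤ) :
    ∑ ℓ with χ ℓ = ε, ψ (ℓ * t) = gaussPeriod ψ (ε * χ t) := by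
  rw [gaussPeriod, sum_filter, sum_filter]
  refine Fintype.sum_equiv (Equiv.mulRight₀ t ht) _ _ fun ℓ => ?_
  change _ = if χ (ℓ * t) = _ then ψ (ℓ * t) else 0
  simp_rw [map_mul χ, mul_left_inj' (quadraticChar_eq_zero_iff.not.2 ht)]

variable (ψ) in
theorem zmodFourier_indicator_quadraticChar {t : ZMod p} (ht : t ≠ 0) (ε : ℤ) :
    zmodFourier ψ (fun k => if χ k = ε then 1 else 0) t = gaussPeriod ψ (ε * χ t) := by
  simp only [zmodFourier, ite_mul, one_mul, zero_mul]
  rw [← sum_filter, sum_filter_quadraticChar_mul ht]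

theorem gaussPeriod_one_add_gaussPeriod_neg_one (hψ : ψ.IsPrimitive) :
    gaussPeriod ψ 1 + gaussPeriod ψ (-1) = -1 := by
  have hsplit (ℓ : ZMod p) : ψ ℓ = (if ℓ = 0 then 1 else 0) +
      ((if χ ℓ = 1 then ψ ℓ else 0) + if χ ℓ = -1 then ψ ℓ else 0) := by
    rcases eq_or_ne ℓ 0 with rfl | hℓ
    · simp
    · rcases quadraticChar_dichotomy hℓ with h | h <;> simp [hℓ, h]
  have hsum : ∑ ℓ, ψ ℓ = 0 := by simpa using AddChar.sum_mulShift 1 hψ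
  rw [sum_congr rfl fun ℓ _ => hsplit ℓ, sum_add_distrib, sum_add_distrib, sum_ite_eq',
    if_pos (mem_univ _)] at hsum
  rw [gaussPeriod, gaussPeriod, sum_filter, sum_filter]
  linear_combination hsum

theorem gaussPeriod_sq [CharP K 2] (hp2 : p ≠ 2) (h2 : IsSquare (2 : ZMod p)) (ε : ℤ) :
    gaussPeriod ψ ε ^ 2 = gaussPeriod ψ ε := by
  have h2ne : (2 : ZMod p) ≠ 0 := Ring.two_ne_zero ((ZMod.ringChar_zmod_n p).trans_ne hp2)
  have hsq (ℓ : ZMod p) : ψ ℓ ^ 2 = ψ (ℓ * 2) := by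
    rw [← AddChar.map_nsmul_eq_pow, nsmul_eq_mul, mul_comm, Nat.cast_ofNat]
  rw [gaussPeriod, sum_pow_char, sum_congr rfl fun ℓ _ => hsq ℓ,
    sum_filter_quadraticChar_mul h2ne, (quadraticChar_one_iff_isSquare h2ne).2 h2, mul_one]
  rfl

theorem exists_gaussPeriod_eq_zero_and_eq_one [CharP K 2] (hψ : ψ.IsPrimitive) (hp2 : p ≠ 2)
    (h2 : IsSquare (2 : ZMod p)) : ∃ ε, gaussPeriod ψ ε = 0 ∧ gaussPeriod ψ (-ε) = 1 := by
  have hsum : gaussPeriod ψ 1 + gaussPeriod ψ (-1) = 1 := by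
    rw [gaussPeriod_one_add_gaussPeriod_neg_one hψ, CharTwo.neg_eq]
  have hidem : IsIdempotentElem (gaussPeriod ψ 1) := by
    rw [IsIdempotentElem, ← sq, gaussPeriod_sq hp2 h2]
  rcases IsIdempotentElem.iff_eq_zero_or_one.1 hidem with h | h
  · exact ⟨1, h, by rwa [h, zero_add] at hsum⟩
  · exact ⟨-1, by linear_combination hsum - h, by rwa [neg_neg]⟩

end GaussPeriod

theorem ZMod.finEquiv_apply {n : ℕ} [NeZero n] (i : Fin n) : ZMod.finEquiv n i = (i : ℕ) := by
  obtain ⟨n, rfl⟩ := Nat.exists_eq_succ_of_ne_zero (NeZero.ne n)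
  exact (Fin.cast_val_eq_self i).symm

theorem AddChar.exists_isPrimitive_apply_one_eq {n : ℕ} [NeZero n] {K : Type*} [Field K] {α : K}
    (hα : orderOf α = n) : ∃ ψ : AddChar (ZMod n) K, ψ.IsPrimitive ∧ ψ 1 = α := by
  have hprim : IsPrimitiveRoot α n := hα ▸ IsPrimitiveRoot.orderOf α
  refine ⟨_, zmodChar_primitive_of_primitive_root n hprim, ?_⟩
  simpa using zmodChar_apply' ((IsPrimitiveRoot.iff_def α n).mp hprim).1 1

section ExtendedCode

variable {p : ℕ} {K : Type*} [Field K] [CharP K 2] {α : K}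

theorem zero_mem_dualCode {n : ℕ} (C : Set (Fin n → ZMod 2)) : 0 ∈ dualCode C := by
  simp [dualCode]

theorem one_mem_dualCode_extQRCode : 1 ∈ dualCode (extQRCode p K α) := by
  simp [dualCode, extQRCode]

theorem snoc_sum_mem_extQRCode {x : Fin p → ZMod 2} (hx : x ∈ QRCode p K α) :
    (Fin.snoc x (∑ i, x i) : Fin (p + 1) → ZMod 2) ∈ extQRCode p K α := by
  refine ⟨by simpa using hx, ?_⟩
  rw [Fin.sum_univ_castSucc]
  simp [CharTwo.add_self_eq_zero]

theorem sum_mul_castSucc_add_last_eq_zero {c : Fin (p + 1) → ZMod 2}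
    (hc : c ∈ dualCode (extQRCode p K α)) {x : Fin p → ZMod 2} (hx : x ∈ QRCode p K α) :
    ∑ i, x i * (c i.castSucc + c (Fin.last p)) = 0 := by
  have := hc _ (snoc_sum_mem_extQRCode hx)
  rw [Fin.sum_univ_castSucc] at this
  simpa [mul_add, sum_add_distrib, sum_mul] using this

end ExtendedCode

section BinaryVectors

variable {n : ℕ}

theorem sum_castSucc_add_last (hn : Odd n) (c : Fin (n + 1) → ZMod 2) :
    ∑ i : Fin n, (c i.castSucc + c (Fin.last n)) = ∑ i, c i := by
  rw [sum_add_distrib, sum_const, card_univ, Fintype.card_fin, nsmul_eq_mul,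
    ZMod.natCast_eq_one_iff_odd.2 hn, one_mul, Fin.sum_univ_castSucc]

theorem sum_one_eq_zero (hn : Odd n) : ∑ _i : Fin (n + 1), (1 : ZMod 2) = 0 := by
  rw [sum_const, card_univ, Fintype.card_fin, nsmul_one, ZMod.natCast_eq_zero_iff_even]
  exact hn.add_one

theorem eq_zero_or_eq_one_of_castSucc_add_last_eq_zero {c : Fin (n + 1) → ZMod 2}
    (h : (fun i : Fin n => c i.castSucc + c (Fin.last n)) = 0) : c = 0 ∨ c = 1 := by
  have hconst (i : Fin (n + 1)) : c i = c (Fin.last n) := by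
    induction i using Fin.lastCases with
    | last => rfl
    | cast i => exact CharTwo.add_eq_zero.1 (congrFun h i)
  rcases (by decide : ∀ a : ZMod 2, a = 0 ∨ a = 1) (c (Fin.last n)) with h0 | h1
  · exact Or.inl (funext fun i => (hconst i).trans h0)
  · exact Or.inr (funext fun i => (hconst i).trans h1)

end BinaryVectors

section QuadraticResidueCode

variable {p : ℕ} {K : Type*} [Field K] [CharP K 2]

variable (K) in
def castVec [NeZero p] (x : Fin p → ZMod 2) (k : ZMod p) : K :=
  ZMod.castHom (dvd_refl 2) K (x ((ZMod.finEquiv p).symm k))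

theorem sum_castVec_mul_castVec [NeZero p] (x y : Fin p → ZMod 2) :
    ∑ k, castVec K x k * castVec K y k = ZMod.castHom (dvd_refl 2) K (∑ i, x i * y i) := by
  rw [map_sum, ← Equiv.sum_comp (ZMod.finEquiv p).toEquiv]
  simp [castVec]

theorem sum_castHom_mul_pow_eq_zmodFourier [NeZero p] (ψ : AddChar (ZMod p) K)
    (x : Fin p → ZMod 2) (ℓ : ZMod p) :
    ∑ i : Fin p, ZMod.castHom (dvd_refl 2) K (x i) * ψ 1 ^ ((i : ℕ) * ℓ.val) =
      zmodFourier ψ (castVec K x) ℓ := by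
  rw [zmodFourier, ← Equiv.sum_comp (ZMod.finEquiv p).toEquiv]
  refine sum_congr rfl fun i _ => ?_
  rw [← AddChar.map_nsmul_eq_pow, nsmul_one]
  simp only [castVec, RingEquiv.toEquiv_eq_coe, EquivLike.coe_coe, RingEquiv.symm_apply_apply]
  rw [ZMod.finEquiv_apply, Nat.cast_mul, ZMod.natCast_zmod_val]

variable [Fact p.Prime] {ψ : AddChar (ZMod p) K}

local notation "χ" => quadraticChar (ZMod p)

theorem exists_sq_eq_iff_quadraticChar_eq_one (ℓ : ZMod p) :
    (∃ m : ZMod p, m ≠ 0 ∧ m ^ 2 = ℓ) ↔ χ ℓ = 1 := by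
  constructor
  · rintro ⟨m, hm, rfl⟩
    exact quadraticChar_sq_one' hm
  · intro h
    have hℓ : ℓ ≠ 0 := by rintro rfl; simp at h
    obtain ⟨m, rfl⟩ := (quadraticChar_one_iff_isSquare hℓ).mp h
    exact ⟨m, fun hm => hℓ (by simp [hm]), sq m⟩

theorem mem_QRCode_iff {x : Fin p → ZMod 2} :
    x ∈ QRCode p K (ψ 1) ↔ ∀ ℓ, χ ℓ = 1 → zmodFourier ψ (castVec K x) ℓ = 0 := by
  simp only [QRCode, Set.mem_ofPred_eq, sum_castHom_mul_pow_eq_zmodFourier,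
    exists_sq_eq_iff_quadraticChar_eq_one]

theorem const_mem_QRCode (hψ : ψ.IsPrimitive) (a : ZMod 2) :
    (fun _ => a) ∈ QRCode p K (ψ 1) :=
  mem_QRCode_iff.2 fun ℓ hℓ => zmodFourier_const hψ _ (by rintro rfl; simp at hℓ)

theorem add_const_mem_QRCode (hψ : ψ.IsPrimitive) {x : Fin p → ZMod 2}
    (hx : x ∈ QRCode p K (ψ 1)) (a : ZMod 2) : (fun i => x i + a) ∈ QRCode p K (ψ 1) := by
  have hsplit : castVec K (fun i => x i + a) = castVec K x + castVec K fun _ => a := by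
    ext k
    simp [castVec]
  rw [mem_QRCode_iff, hsplit]
  intro ℓ hℓ
  rw [zmodFourier_add, mem_QRCode_iff.1 hx ℓ hℓ, mem_QRCode_iff.1 (const_mem_QRCode hψ a) ℓ hℓ,
    add_zero]

theorem castVec_indicator_sub (ε : ℤ) (j : ZMod p) :
    castVec K (fun i => if χ (ZMod.finEquiv p i - j) = ε then 1 else 0) =
      fun k => if χ (k - j) = ε then 1 else 0 := by
  ext k
  simp [castVec, apply_ite]

theorem indicator_sub_mem_QRCode {ε : ℤ} (hε : gaussPeriod ψ ε = 0) (j : ZMod p) :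
    (fun i => if χ (ZMod.finEquiv p i - j) = ε then 1 else 0) ∈ QRCode p K (ψ 1) := by
  rw [mem_QRCode_iff, castVec_indicator_sub]
  intro ℓ hℓ
  have hℓ0 : ℓ ≠ 0 := by rintro rfl; simp at hℓ
  refine (zmodFourier_comp_sub ψ (fun k => if χ k = ε then 1 else 0) j ℓ).trans ?_
  rw [zmodFourier_indicator_quadraticChar ψ hℓ0, hℓ, mul_one, hε, mul_zero]

theorem eq_zero_of_castVec_eq_zero {x : Fin p → ZMod 2} (hx : castVec K x = 0) : x = 0 := by
  funext i
  apply (ZMod.castHom (dvd_refl 2) K).injective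
  simpa [castVec] using congrFun hx (ZMod.finEquiv p i)

theorem eq_zero_of_mem_QRCode_of_forall_sum_mul_eq_zero (hψ : ψ.IsPrimitive) (hp2 : p ≠ 2)
    (h2 : IsSquare (2 : ZMod p)) (hneg : IsSquare (-1 : ZMod p)) {d : Fin p → ZMod 2}
    (hd : d ∈ QRCode p K (ψ 1)) (hsum : ∑ i, d i = 0)
    (horth : ∀ x ∈ QRCode p K (ψ 1), ∑ i, x i * d i = 0) : d = 0 := by
  obtain ⟨ε, hε, hε'⟩ := exists_gaussPeriod_eq_zero_and_eq_one hψ hp2 h2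
  have hχneg : χ (-1) = 1 := (quadraticChar_one_iff_isSquare (neg_ne_zero.2 one_ne_zero)).2 hneg
  set I : ZMod p → K := fun k => if χ k = ε then 1 else 0
  have hcorr : (fun j => ∑ k, I (k - j) * castVec K d k) = 0 := by
    funext j
    have := congrArg (ZMod.castHom (dvd_refl 2) K) (horth _ (indicator_sub_mem_QRCode hε j))
    rwa [← sum_castVec_mul_castVec, castVec_indicator_sub, map_zero] at this
  have hfourier (m : ZMod p) : zmodFourier ψ (castVec K d) m = 0 := by
    rcases eq_or_ne m 0 with rfl | hm
    · simpa [zmodFourier, castVec, hsum] using sum_castVec_mul_castVec (K := K) d 1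
    rcases quadraticChar_dichotomy hm with hm1 | hm1
    · exact mem_QRCode_iff.1 hd m hm1
    · have := zmodFourier_correlation ψ (castVec K d) I m
      rw [hcorr, zmodFourier_indicator_quadraticChar ψ (neg_ne_zero.2 hm), neg_eq_neg_one_mul,
        map_mul, hχneg, hm1] at this
      simpa [zmodFourier, hε'] using this.symm
  have hpK : (p : K) ≠ 0 := by
    rw [Ne, CharP.cast_eq_zero_iff K 2, ← even_iff_two_dvd, Nat.not_even_iff_odd]
    exact (Fact.out : p.Prime).odd_of_ne_two hp2
  exact eq_zero_of_castVec_eq_zero (eq_zero_of_zmodFourier_eq_zero hψ hpK hfourier)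

end QuadraticResidueCode

/-- For a prime `p ≡ 1 (mod 8)`,
`Q̃_{p+1} ∩ Q̃_{p+1}^⊥ = {0, 1}` (the zero vector and the all-ones vector). -/
theorem extQR_inter_dual (p : ℕ) (hp : p.Prime) (h8 : p % 8 = 1)
    (K : Type*) [Field K] [CharP K 2] (α : K) (hα : orderOf α = p) :
    extQRCode p K α ∩ dualCode (extQRCode p K α)
      = ({0, 1} : Set (Fin (p + 1) → ZMod 2)) := by
  have := Fact.mk hp
  have hp2 : p ≠ 2 := by omega
  have hodd : Odd p := hp.odd_of_ne_two hp2
  obtain ⟨ψ, hψ, rfl⟩ := AddChar.exists_isPrimitive_apply_one_eq hα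
  ext c
  constructor
  · rintro ⟨⟨hcQ, hcsum⟩, hcdual⟩
    apply eq_zero_or_eq_one_of_castSucc_add_last_eq_zero
    refine eq_zero_of_mem_QRCode_of_forall_sum_mul_eq_zero hψ hp2
      ((ZMod.exists_sq_eq_two_iff hp2).2 (Or.inl h8)) (ZMod.exists_sq_eq_neg_one_iff.2 (by omega))
      (add_const_mem_QRCode hψ hcQ _) ?_ fun x hx => sum_mul_castSucc_add_last_eq_zero hcdual hx
    rw [sum_castSucc_add_last hodd, hcsum]
  · rintro (rfl | rfl)
    · exact ⟨⟨const_mem_QRCode hψ 0, by simp⟩, zero_mem_dualCode _⟩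
    · exact ⟨⟨const_mem_QRCode hψ 1, sum_one_eq_zero hodd⟩, one_mem_dualCode_extQRCode⟩
end

section
/- Let X = {1,…,n}, let G be a subgroup of S_n, and suppose the action of G on the set of t-element subsets of X has exactly two orbits GT_1 and GT_2 of equal size. Define the Reynolds operator R on ℝX_t by R(T) := (1/|G|) Σ_{σ∈G} T^σ. Then every f ∈ Harm_t^G is a real scalar multiple of R(T_1) − R(T_2); that is, the space Harm_t^G is at most one-dimensional and is contained in the span of R(T_1) − R(T_2). -/
/-- The differentiation `γ`: for `y` of cardinality `k - 1`,
`(γ f)(y) = ∑_{z ⊇ y, |z| = |y| + 1} f(z)`. -/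
def gammaD {n : ℕ} (f : Finset (Fin n) → ℝ) (y : Finset (Fin n)) : ℝ :=
  ∑ i ∈ yᶜ, f (insert i y)

/-- `f ∈ Harm_k`: a degree-`k` harmonic function, i.e. an element of `ℝX_k`
(a real-valued function supported on the `k`-element subsets) killed by `γ`. -/
def IsHarm {n : ℕ} (k : ℕ) (f : Finset (Fin n) → ℝ) : Prop :=
  (∀ s : Finset (Fin n), s.card ≠ k → f s = 0) ∧ ∀ y : Finset (Fin n), gammaD f y = 0

/-- `f̃(u) = ∑_{z ⊆ u} f(z)`. -/
def ftilde {n : ℕ} (f : Finset (Fin n) → ℝ) (u : Finset (Fin n)) : ℝ :=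
  ∑ z ∈ u.powerset, f z

/-- The Reynolds operator applied to a `t`-subset `T`:
`R(T) = (1/|G|) ∑_{σ ∈ G} T^σ`, as an element of `ℝX_t`. -/
noncomputable def reynolds {n : ℕ} (G : Subgroup (Equiv.Perm (Fin n))) (T : Finset (Fin n))
    (s : Finset (Fin n)) : ℝ :=
  (1 / (Nat.card G : ℝ)) *
    (Nat.card {σ : G | T.image (σ : Equiv.Perm (Fin n)) = s} : ℝ)

open Finset MulAction
open scoped Pointwise

namespace MulAction

variable {G X : Type*} [Group G] [MulAction G X]

lemma natCard_fiber_smul_eq_natCard_stabilizer (x : X) (g : G) :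
    Nat.card {h : G // h • x = g • x} = Nat.card (stabilizer G x) :=
  Nat.card_congr
    { toFun := fun h => ⟨g⁻¹ * h, by simp [mul_smul, h.2]⟩
      invFun := fun h => ⟨g * h, by simp [mul_smul, mem_stabilizer_iff.mp h.2]⟩
      left_inv := fun h => by simp
      right_inv := fun h => by simp }

lemma natCard_orbit_mul_natCard_fiber {x y : X} (hy : y ∈ orbit G x) :
    Nat.card (orbit G x) * Nat.card {h : G // h • x = y} = Nat.card G := by
  obtain ⟨g, rfl⟩ := hy
  rw [natCard_fiber_smul_eq_natCard_stabilizer, Nat.card_coe_set_eq, ← index_stabilizer,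
    Subgroup.index_mul_card]

lemma sum_natCard_fiber [Finite G] [Fintype X] (x : X) :
    ∑ y : X, Nat.card {h : G // h • x = y} = Nat.card G := by
  rw [← Nat.card_sigma, Nat.card_congr (Equiv.sigmaFiberEquiv _)]

end MulAction

section Reynolds

variable {n : ℕ} (G : Subgroup (Equiv.Perm (Fin n)))

lemma orbitT_eq_orbit (T : Finset (Fin n)) :
    orbitT (G : Set (Equiv.Perm (Fin n))) T = orbit G T := by
  ext S
  simp [orbitT, mem_orbit_iff, smul_finset_def]

lemma reynolds_eq_inv_mul_natCard_fiber (T s : Finset (Fin n)) :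
    reynolds G T s = (Nat.card G : ℝ)⁻¹ * Nat.card {σ : G // σ • T = s} := by
  rw [reynolds, one_div]; rfl

lemma sum_reynolds (T : Finset (Fin n)) : ∑ s, reynolds G T s = 1 := by
  simp_rw [reynolds_eq_inv_mul_natCard_fiber, ← mul_sum]
  rw [← Nat.cast_sum, sum_natCard_fiber, inv_mul_cancel₀ (by exact_mod_cast Nat.card_pos.ne')]

lemma natCard_orbit_mul_reynolds (T s : Finset (Fin n)) :
    Nat.card (orbit G T) * reynolds G T s = (orbit G T).indicator 1 s := by
  by_cases hs : s ∈ orbit G T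
  · rw [Set.indicator_of_mem hs, Pi.one_apply, reynolds_eq_inv_mul_natCard_fiber, mul_left_comm,
      ← Nat.cast_mul, natCard_orbit_mul_natCard_fiber hs,
      inv_mul_cancel₀ (by exact_mod_cast Nat.card_pos.ne')]
  · have : IsEmpty {σ : G // σ • T = s} := ⟨fun σ => hs ⟨σ, σ.2⟩⟩
    simp [reynolds_eq_inv_mul_natCard_fiber, hs]

end Reynolds

section Harmonic

variable {n : ℕ}

-- Double counting through the bijection `(y, i) ↦ (insert i y, i)`, `i ∉ y`.
lemma sum_gammaD (f : Finset (Fin n) → ℝ) :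
    ∑ y, gammaD f y = ∑ z, (z.card : ℝ) * f z := by
  simp_rw [gammaD, ← nsmul_eq_mul, ← sum_const, sum_sigma']
  refine sum_bij' (fun p _ => ⟨insert p.2 p.1, p.2⟩) (fun p _ => ⟨p.1.erase p.2, p.2⟩)
    ?_ ?_ ?_ ?_ fun _ _ => rfl
  all_goals rintro ⟨z, i⟩ h; simp_all [insert_erase]

lemma IsHarm.sum_eq_zero {k : ℕ} {f : Finset (Fin n) → ℝ} (hk : k ≠ 0) (hf : IsHarm k f) :
    ∑ z, f z = 0 := by
  have h : (k : ℝ) * ∑ z, f z = 0 := calc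
    (k : ℝ) * ∑ z, f z = ∑ z, (z.card : ℝ) * f z := by
      rw [mul_sum]
      refine sum_congr rfl fun z _ => ?_
      by_cases hz : z.card = k
      · rw [hz]
      · rw [hf.1 z hz, mul_zero, mul_zero]
    _ = ∑ y, gammaD f y := (sum_gammaD f).symm
    _ = 0 := by simp [hf.2]
  exact (mul_eq_zero.1 h).resolve_left (by exact_mod_cast hk)

end Harmonic

section Invariant

variable {n : ℕ} {G : Subgroup (Equiv.Perm (Fin n))} {f : Finset (Fin n) → ℝ}

lemma apply_eq_of_mem_orbit (hf : ∀ σ ∈ G, ∀ s : Finset (Fin n), f (s.image σ) = f s)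
    {T s : Finset (Fin n)} (hs : s ∈ orbit G T) : f s = f T := by
  obtain ⟨σ, rfl⟩ := hs
  exact hf σ σ.2 T

lemma apply_eq_reynolds_add_reynolds (hf : ∀ σ ∈ G, ∀ s : Finset (Fin n), f (s.image σ) = f s)
    {T₁ T₂ : Finset (Fin n)} (hdisj : Disjoint (orbit G T₁) (orbit G T₂))
    (hsupp : ∀ s, s ∉ orbit G T₁ → s ∉ orbit G T₂ → f s = 0) (s : Finset (Fin n)) :
    f s = Nat.card (orbit G T₁) * f T₁ * reynolds G T₁ s
      + Nat.card (orbit G T₂) * f T₂ * reynolds G T₂ s := by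
  simp_rw [mul_right_comm _ (f _), natCard_orbit_mul_reynolds]
  by_cases h₁ : s ∈ orbit G T₁
  · simp [h₁, Set.disjoint_left.1 hdisj h₁, apply_eq_of_mem_orbit hf h₁]
  by_cases h₂ : s ∈ orbit G T₂
  · simp [h₁, h₂, apply_eq_of_mem_orbit hf h₂]
  · simp [h₁, h₂, hsupp s h₁ h₂]

end Invariant

/-- If a subgroup `G ≤ Sₙ` has exactly two orbits `GT₁ ⊔ GT₂` of equal
size on `t`-element subsets of `{1,…,n}`, then every `G`-invariant degree-`t` harmonic
function is a real scalar multiple of `R(T₁) - R(T₂)`. -/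
theorem harm_invariant_eq_reynolds_diff {n t : ℕ} (G : Subgroup (Equiv.Perm (Fin n)))
    (T₁ T₂ : Finset (Fin n)) (hT₁ : T₁.card = t) (hT₂ : T₂.card = t)
    (hcover : ∀ T : Finset (Fin n), T.card = t →
      T ∈ orbitT (↑G) T₁ ∨ T ∈ orbitT (↑G) T₂)
    (hdisj : Disjoint (orbitT (↑G : Set (Equiv.Perm (Fin n))) T₁)
      (orbitT (↑G : Set (Equiv.Perm (Fin n))) T₂))
    (hsize : Nat.card (orbitT (↑G : Set (Equiv.Perm (Fin n))) T₁)
      = Nat.card (orbitT (↑G : Set (Equiv.Perm (Fin n))) T₂)) :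
    ∀ f : Finset (Fin n) → ℝ, IsHarm t f →
      (∀ σ ∈ G, ∀ s : Finset (Fin n), f (s.image σ) = f s) →
      ∃ c : ℝ, f = fun s => c * (reynolds G T₁ s - reynolds G T₂ s) := by
  intro f hf hGf
  simp only [orbitT_eq_orbit] at hcover hdisj hsize
  have ht : t ≠ 0 := by
    rintro rfl
    rw [card_eq_zero] at hT₁ hT₂
    subst hT₁ hT₂
    exact Set.disjoint_left.1 hdisj (mem_orbit_self _) (mem_orbit_self _)
  have hdecomp := apply_eq_reynolds_add_reynolds hGf hdisj
    fun s h₁ h₂ => hf.1 s fun hs => (hcover s hs).elim h₁ h₂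
  have hsum : (Nat.card (orbit G T₁) : ℝ) * (f T₁ + f T₂) = 0 := by
    rw [← hf.sum_eq_zero ht, sum_congr rfl fun s _ => hdecomp s, sum_add_distrib, ← mul_sum,
      ← mul_sum, sum_reynolds, sum_reynolds, ← hsize]
    ring
  refine ⟨Nat.card (orbit G T₁) * f T₁, funext fun s => ?_⟩
  rw [hdecomp s, ← hsize]
  linear_combination reynolds G T₂ s * hsum
end
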